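/- arXiv:1611.02330 — 4 statements merged into one kernel-verified Lean document; each statement's English description precedes it below -/
import Mathlib

section
/- Let b, c : ℝ → ℝ be smooth, let m₁, m₂, m₃ ∈ ℝ satisfy m₁ = m₃² − m₂², and define m(y) = m₁·y + m₂·B(y) + m₃·C(y). Then Q(t,x) = exp(m₂t + m₃x) satisfies ∂ₜ²Q − ∂ₓ²Q − b(y)·∂ₜQ − c(y)·∂ₓQ + m′(y)·Q = 0 for all (t,x) ∈ ℝ² and all y ∈ ℝ. In particular, for every smooth solution u of the wave equation F[u] = 0, the function q(t,x) = exp(m₂t + m₃x) satisfies L*[u]q = 0, i.e., it is an adjoint-symmetry along u. -/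
noncomputable section

open Real

/-- Partial derivative in the first (time) variable. -/
def Dt (u : ℝ → ℝ → ℝ) : ℝ → ℝ → ℝ := fun t x => deriv (fun s => u s x) t

/-- Partial derivative in the second (space) variable. -/
def Dx (u : ℝ → ℝ → ℝ) : ℝ → ℝ → ℝ := fun t x => deriv (fun s => u t s) x

/-- Smoothness (C^∞) of a function of two real variables. -/
def Smooth2 (u : ℝ → ℝ → ℝ) : Prop := ContDiff ℝ (⊤ : ℕ∞) (fun p : ℝ × ℝ => u p.1 p.2)
/-- The semilinear wave operator F[u] = ∂ₜ²u − ∂ₓ²u + b(u)∂ₜu + c(u)∂ₓu + m(u). -/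
def Fop (b c m : ℝ → ℝ) (u : ℝ → ℝ → ℝ) : ℝ → ℝ → ℝ := fun t x =>
  Dt (Dt u) t x - Dx (Dx u) t x + b (u t x) * Dt u t x + c (u t x) * Dx u t x + m (u t x)

/-- The adjoint linearized operator along u:
L*[u]q = ∂ₜ²q − ∂ₓ²q − b(u)∂ₜq − c(u)∂ₓq + m′(u)q. -/
def Lstar (b c m : ℝ → ℝ) (u q : ℝ → ℝ → ℝ) : ℝ → ℝ → ℝ := fun t x =>
  Dt (Dt q) t x - Dx (Dx q) t x - b (u t x) * Dt q t x - c (u t x) * Dx q t x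
    + deriv m (u t x) * q t x

lemma expderiv (a b0 t : ℝ) :
    deriv (fun s => Real.exp (a * s + b0)) t = a * Real.exp (a * t + b0) := by
  have h : HasDerivAt (fun s => Real.exp (a * s + b0)) (Real.exp (a * t + b0) * a) t := by
    have := (((hasDerivAt_id t).const_mul a).add_const b0).exp
    simpa using this
  rw [h.deriv]; ring

lemma intderiv (f : ℝ → ℝ) (hf : Continuous f) (y : ℝ) :
    HasDerivAt (fun z => ∫ s in (0:ℝ)..z, f s) (f y) y :=
  intervalIntegral.integral_hasDerivAt_right (hf.intervalIntegrable _ _)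
    (hf.stronglyMeasurableAtFilter _ _) hf.continuousAt

/-- The function Q(t,x) = exp(m₂t + m₃x) is an adjoint-symmetry of the
semilinear wave equation when m₁ = m₃² − m₂² and m = m₁u + m₂∫b + m₃∫c. -/
theorem stmt_2
    (b c : ℝ → ℝ) (hb : ContDiff ℝ (⊤ : ℕ∞) b) (hc : ContDiff ℝ (⊤ : ℕ∞) c)
    (m₁ m₂ m₃ : ℝ) (hm₁ : m₁ = m₃ ^ 2 - m₂ ^ 2)
    (m : ℝ → ℝ)
    (hmdef : ∀ y, m y = m₁ * y + m₂ * (∫ s in (0:ℝ)..y, b s) + m₃ * (∫ s in (0:ℝ)..y, c s))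
    (Q : ℝ → ℝ → ℝ) (hQdef : ∀ t x, Q t x = Real.exp (m₂ * t + m₃ * x)) :
    (∀ t x y : ℝ,
      Dt (Dt Q) t x - Dx (Dx Q) t x - b y * Dt Q t x - c y * Dx Q t x
        + deriv m y * Q t x = 0)
    ∧ (∀ u : ℝ → ℝ → ℝ, Smooth2 u → (∀ t x, Fop b c m u t x = 0) →
        ∀ t x, Lstar b c m u Q t x = 0) := by
  -- derivative of m
  have hm' : ∀ y, deriv m y = m₁ + m₂ * b y + m₃ * c y := by
    intro y
    have h : HasDerivAt m (m₁ + m₂ * b y + m₃ * c y) y := by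
      have h1 : HasDerivAt (fun z : ℝ => m₁ * z) m₁ y := by
        simpa using (hasDerivAt_id y).const_mul m₁
      have h2 := (intderiv b hb.continuous y).const_mul m₂
      have h3 := (intderiv c hc.continuous y).const_mul m₃
      have := (h1.add h2).add h3
      exact this.congr_of_eventuallyEq (Filter.Eventually.of_forall fun z => hmdef z)
    exact h.deriv
  have hQt : ∀ t x, Dt Q t x = m₂ * Q t x := by
    intro t x
    have : (fun s => Q s x) = fun s => Real.exp (m₂ * s + m₃ * x) := funext fun s => hQdef s x
    rw [Dt, this, expderiv, hQdef]
  have hQx : ∀ t x, Dx Q t x = m₃ * Q t x := by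
    intro t x
    have : (fun s => Q t s) = fun s => Real.exp (m₃ * s + m₂ * t) := by
      funext s; rw [hQdef]; ring_nf
    rw [Dx, this, expderiv, hQdef]
    ring_nf
  have hQtt : ∀ t x, Dt (Dt Q) t x = m₂ * (m₂ * Q t x) := by
    intro t x
    have : (fun s => Dt Q s x) = fun s => m₂ * Real.exp (m₂ * s + m₃ * x) := by
      funext s; rw [hQt, hQdef]
    rw [Dt, this]
    rw [deriv_const_mul _ (by
      have : HasDerivAt (fun s => Real.exp (m₂ * s + m₃ * x))
          (Real.exp (m₂ * t + m₃ * x) * m₂) t := by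
        simpa using (((hasDerivAt_id t).const_mul m₂).add_const (m₃ * x)).exp
      exact this.differentiableAt)]
    rw [expderiv, hQdef]
  have hQxx : ∀ t x, Dx (Dx Q) t x = m₃ * (m₃ * Q t x) := by
    intro t x
    have : (fun s => Dx Q t s) = fun s => m₃ * Real.exp (m₃ * s + m₂ * t) := by
      funext s; rw [hQx, hQdef]; ring_nf
    rw [Dx, this]
    rw [deriv_const_mul _ (by
      have : HasDerivAt (fun s => Real.exp (m₃ * s + m₂ * t))
          (Real.exp (m₃ * x + m₂ * t) * m₃) x := by
        simpa using (((hasDerivAt_id x).const_mul m₃).add_const (m₂ * t)).exp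
      exact this.differentiableAt)]
    rw [expderiv, hQdef]
    ring_nf
  have key : ∀ t x y : ℝ,
      Dt (Dt Q) t x - Dx (Dx Q) t x - b y * Dt Q t x - c y * Dx Q t x
        + deriv m y * Q t x = 0 := by
    intro t x y
    rw [hQtt, hQxx, hQt, hQx, hm', hm₁]
    ring
  exact ⟨key, fun u _ _ t x => key t x (u t x)⟩
end
end

section
/- Let m : ℝ → ℝ be smooth and let b₀, c₀, b₁, c₁, α, β ∈ ℝ satisfy b₁β + c₁α = 1 and β(β − b₀) = α(α + c₀). Define b(y) = b₀ + b₁·m′(y) and c(y) = c₀ + c₁·m′(y). Then Q(t,x) = exp(αx + βt) satisfies ∂ₜ²Q − ∂ₓ²Q − b(y)·∂ₜQ − c(y)·∂ₓQ + m′(y)·Q = 0 for all (t,x) ∈ ℝ² and all y ∈ ℝ. In particular, for every smooth solution u of the wave equation F[u] = 0, the function q(t,x) = exp(αx + βt) satisfies L*[u]q = 0, i.e., it is an adjoint-symmetry along u. -/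
noncomputable section

open Real

/-- The function Q(t,x) = exp(αx + βt) is an adjoint-symmetry of the semilinear
wave equation with b = b₀ + b₁m′, c = c₀ + c₁m′, when b₁β + c₁α = 1 and
β(β − b₀) = α(α + c₀). -/
theorem stmt_3
    (m : ℝ → ℝ) (hm : ContDiff ℝ (⊤ : ℕ∞) m)
    (b₀ c₀ b₁ c₁ α β : ℝ)
    (h1 : b₁ * β + c₁ * α = 1) (h2 : β * (β - b₀) = α * (α + c₀))
    (b c : ℝ → ℝ)
    (hbdef : ∀ y, b y = b₀ + b₁ * deriv m y)
    (hcdef : ∀ y, c y = c₀ + c₁ * deriv m y)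
    (Q : ℝ → ℝ → ℝ) (hQdef : ∀ t x, Q t x = Real.exp (α * x + β * t)) :
    (∀ t x y : ℝ,
      Dt (Dt Q) t x - Dx (Dx Q) t x - b y * Dt Q t x - c y * Dx Q t x
        + deriv m y * Q t x = 0)
    ∧ (∀ u : ℝ → ℝ → ℝ, Smooth2 u → (∀ t x, Fop b c m u t x = 0) →
        ∀ t x, Lstar b c m u Q t x = 0) := by
  have hdt : ∀ t x, HasDerivAt (fun s => Real.exp (α * x + β * s)) (β * Real.exp (α * x + β * t)) t := by
    intro t x
    simpa [mul_comm] using (((hasDerivAt_id t).const_mul β).const_add (α * x)).exp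
  have hdx : ∀ t x, HasDerivAt (fun s => Real.exp (α * s + β * t)) (α * Real.exp (α * x + β * t)) x := by
    intro t x
    simpa [mul_comm] using (((hasDerivAt_id x).const_mul α).add_const (β * t)).exp
  have hQ : Q = fun t x => Real.exp (α * x + β * t) := by
    funext t x; exact hQdef t x
  subst hQ
  have hDt : Dt (fun t x => Real.exp (α * x + β * t)) = fun t x => β * Real.exp (α * x + β * t) := by
    funext t x; exact (hdt t x).deriv
  have hDx : Dx (fun t x => Real.exp (α * x + β * t)) = fun t x => α * Real.exp (α * x + β * t) := by
    funext t x; exact (hdx t x).deriv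
  have hDtt : ∀ t x, Dt (Dt (fun t x => Real.exp (α * x + β * t))) t x
      = β * (β * Real.exp (α * x + β * t)) := by
    intro t x; rw [hDt]; exact ((hdt t x).const_mul β).deriv
  have hDxx : ∀ t x, Dx (Dx (fun t x => Real.exp (α * x + β * t))) t x
      = α * (α * Real.exp (α * x + β * t)) := by
    intro t x; rw [hDx]; exact ((hdx t x).const_mul α).deriv
  have main : ∀ t x y : ℝ,
      Dt (Dt (fun t x => Real.exp (α * x + β * t))) t x
        - Dx (Dx (fun t x => Real.exp (α * x + β * t))) t x
        - b y * Dt (fun t x => Real.exp (α * x + β * t)) t x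
        - c y * Dx (fun t x => Real.exp (α * x + β * t)) t x
        + deriv m y * Real.exp (α * x + β * t) = 0 := by
    intro t x y
    rw [hDtt, hDxx, hDt, hDx, hbdef, hcdef]
    have : β * β - α * α - (b₀ + b₁ * deriv m y) * β - (c₀ + c₁ * deriv m y) * α
        + deriv m y = 0 := by linear_combination h2 - deriv m y * h1
    have he := Real.exp_pos (α * x + β * t)
    simp only []
    linear_combination Real.exp (α * x + β * t) * this
  refine ⟨main, fun u _ _ t x => ?_⟩
  simpa [Lstar] using main t x (u t x)
end
end

section
/- Let m : ℝ → ℝ be smooth, γ ∈ ℝ with γ ≠ 0, ε ∈ {1, −1}, and define b(y) = ε·(γ + m′(y)/γ) and c(y) = −γ + m′(y)/γ. Then for every smooth function q : ℝ → ℝ, the function Q(t,x) = exp(γx)·q(x − εt) satisfies ∂ₜ²Q − ∂ₓ²Q − b(y)·∂ₜQ − c(y)·∂ₓQ + m′(y)·Q = 0 for all (t,x) ∈ ℝ² and all y ∈ ℝ. In particular, for every smooth solution u of the wave equation F[u] = 0, the function Q is an adjoint-symmetry along u, i.e., L*[u]Q = 0. -/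
/-!
Both `∂ₜ` and `∂ₓ` preserve the family `exp (γ x) · p (x − ε t)`, acting on the profile `p` as
`−ε d/dξ` and `γ + d/dξ`. For `ε² = 1` the second-order terms of `∂ₜ² − ∂ₓ²` cancel, and `b`, `c`
are exactly the coefficients that make the remaining first- and zeroth-order terms cancel.
-/

noncomputable section

open Real

def expTravel (γ ε : ℝ) (p : ℝ → ℝ) : ℝ → ℝ → ℝ := fun t x => exp (γ * x) * p (x - ε * t)

section expTravel

variable {γ ε : ℝ} {p p' : ℝ → ℝ}

theorem Dt_expTravel (hp : ∀ y, HasDerivAt p (p' y) y) :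
    Dt (expTravel γ ε p) = expTravel γ ε (fun y => -ε * p' y) := by
  funext t x
  have hξ : HasDerivAt (fun s => x - ε * s) (-ε) t := by
    simpa using ((hasDerivAt_id t).const_mul ε).const_sub x
  refine (((hp _).comp t hξ).const_mul (exp (γ * x))).deriv.trans ?_
  simp only [expTravel]
  ring

theorem Dx_expTravel (hp : ∀ y, HasDerivAt p (p' y) y) :
    Dx (expTravel γ ε p) = expTravel γ ε (fun y => γ * p y + p' y) := by
  funext t x
  have hexp : HasDerivAt (fun s => exp (γ * s)) (exp (γ * x) * γ) x := by
    simpa using ((hasDerivAt_id x).const_mul γ).exp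
  have hξ : HasDerivAt (fun s => s - ε * t) 1 x := (hasDerivAt_id x).sub_const _
  refine (hexp.mul ((hp _).comp x hξ)).deriv.trans ?_
  simp only [expTravel, Function.comp_apply]
  ring

theorem adjoint_expTravel_eq_zero (hγ : γ ≠ 0) (hε : ε * ε = 1) {q q' q'' : ℝ → ℝ}
    (hq : ∀ y, HasDerivAt q (q' y) y) (hq' : ∀ y, HasDerivAt q' (q'' y) y) (μ t x : ℝ) :
    Dt (Dt (expTravel γ ε q)) t x - Dx (Dx (expTravel γ ε q)) t x
      - ε * (γ + μ / γ) * Dt (expTravel γ ε q) t x - (-γ + μ / γ) * Dx (expTravel γ ε q) t x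
      + μ * expTravel γ ε q t x = 0 := by
  have hDtt : Dt (Dt (expTravel γ ε q)) = expTravel γ ε (fun y => -ε * (-ε * q'' y)) := by
    rw [Dt_expTravel hq, Dt_expTravel fun y => (hq' y).const_mul (-ε)]
  have hDxx : Dx (Dx (expTravel γ ε q))
      = expTravel γ ε (fun y => γ * (γ * q y + q' y) + (γ * q' y + q'' y)) := by
    rw [Dx_expTravel hq,
      Dx_expTravel (p := fun y => γ * q y + q' y) fun y => ((hq y).const_mul γ).add (hq' y)]
  rw [hDtt, hDxx, Dt_expTravel hq, Dx_expTravel hq]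
  simp only [expTravel]
  linear_combination
    exp (γ * x) * (q'' (x - ε * t) + (γ + μ / γ) * q' (x - ε * t)) * hε
      - exp (γ * x) * q (x - ε * t) * div_mul_cancel₀ μ hγ

end expTravel

theorem stmt_4_general
    (m : ℝ → ℝ)
    (γ ε : ℝ) (hγ : γ ≠ 0) (hε : ε = 1 ∨ ε = -1)
    (b c : ℝ → ℝ)
    (hbdef : ∀ y, b y = ε * (γ + deriv m y / γ))
    (hcdef : ∀ y, c y = -γ + deriv m y / γ)
    (q : ℝ → ℝ) (hq : ContDiff ℝ (⊤ : ℕ∞) q)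
    (Q : ℝ → ℝ → ℝ) (hQdef : ∀ t x, Q t x = Real.exp (γ * x) * q (x - ε * t)) :
    (∀ t x y : ℝ,
      Dt (Dt Q) t x - Dx (Dx Q) t x - b y * Dt Q t x - c y * Dx Q t x
        + deriv m y * Q t x = 0)
    ∧ (∀ u : ℝ → ℝ → ℝ, Smooth2 u → (∀ t x, Fop b c m u t x = 0) →
        ∀ t x, Lstar b c m u Q t x = 0) := by
  obtain rfl : Q = expTravel γ ε q := funext fun t => funext (hQdef t)
  have hε2 : ε * ε = 1 := by rcases hε with rfl | rfl <;> norm_num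
  have hq' : ContDiff ℝ (⊤ : ℕ∞) (deriv q) := (contDiff_infty_iff_deriv.mp hq).2
  have adjoint (t x y : ℝ) :
      Dt (Dt (expTravel γ ε q)) t x - Dx (Dx (expTravel γ ε q)) t x
        - b y * Dt (expTravel γ ε q) t x - c y * Dx (expTravel γ ε q) t x
        + deriv m y * expTravel γ ε q t x = 0 := by
    rw [hbdef, hcdef]
    exact adjoint_expTravel_eq_zero hγ hε2
      (fun y => (hq.differentiable (by simp) y).hasDerivAt)
      (fun y => (hq'.differentiable (by simp) y).hasDerivAt) _ t x
  exact ⟨adjoint, fun u _ _ t x => adjoint t x (u t x)⟩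

/-- The function Q(t,x) = exp(γx)·q(x − εt) is an adjoint-symmetry of the
semilinear wave equation with b = ε(γ + m′/γ), c = −γ + m′/γ. -/
theorem stmt_4
    (m : ℝ → ℝ) (hm : ContDiff ℝ (⊤ : ℕ∞) m)
    (γ ε : ℝ) (hγ : γ ≠ 0) (hε : ε = 1 ∨ ε = -1)
    (b c : ℝ → ℝ)
    (hbdef : ∀ y, b y = ε * (γ + deriv m y / γ))
    (hcdef : ∀ y, c y = -γ + deriv m y / γ)
    (q : ℝ → ℝ) (hq : ContDiff ℝ (⊤ : ℕ∞) q)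
    (Q : ℝ → ℝ → ℝ) (hQdef : ∀ t x, Q t x = Real.exp (γ * x) * q (x - ε * t)) :
    (∀ t x y : ℝ,
      Dt (Dt Q) t x - Dx (Dx Q) t x - b y * Dt Q t x - c y * Dx Q t x
        + deriv m y * Q t x = 0)
    ∧ (∀ u : ℝ → ℝ → ℝ, Smooth2 u → (∀ t x, Fop b c m u t x = 0) →
        ∀ t x, Lstar b c m u Q t x = 0) :=
  stmt_4_general m γ ε hγ hε b c hbdef hcdef q hq Q hQdef
end
end

section
/- Let b, c, m : ℝ → ℝ be smooth and let Q : ℝ³ → ℝ be smooth, Q = Q(t,x,y), satisfying for all (t,x,y) ∈ ℝ³: (i) Q_yy = 0; (ii) Q_ty − b(y)·Q_y = 0; (iii) Q_xy + c(y)·Q_y = 0; (iv) Q_tt − Q_xx − b(y)·Q_t − c(y)·Q_x − m(y)·Q_y + m′(y)·Q = 0. Then for every smooth solution u of the wave equation F[u] = 0, the composed function v(t,x) := Q(t,x,u(t,x)) satisfies the adjoint equation L*[u]v = ∂ₜ²v − ∂ₓ²v − b(u)·∂ₜv − c(u)·∂ₓv + m′(u)·v = 0 on ℝ². (Thus the substitution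 v = Q(t,x,u) realizes 'nonlinear self-adjointness' of the wave equation: v solves the adjoint equation whenever u solves the equation.) -/
noncomputable section

open Real

/-- Partial derivative of Q(t,x,y) in its first argument. -/
def D1 (Q : ℝ → ℝ → ℝ → ℝ) : ℝ → ℝ → ℝ → ℝ := fun t x y => deriv (fun s => Q s x y) t

/-- Partial derivative of Q(t,x,y) in its second argument. -/
def D2 (Q : ℝ → ℝ → ℝ → ℝ) : ℝ → ℝ → ℝ → ℝ := fun t x y => deriv (fun s => Q t s y) x

/-- Partial derivative of Q(t,x,y) in its third argument. -/
def D3 (Q : ℝ → ℝ → ℝ → ℝ) : ℝ → ℝ → ℝ → ℝ := fun t x y => deriv (fun s => Q t x s) y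

/-- Smoothness (C^∞) of a function of three real variables. -/
def Smooth3 (Q : ℝ → ℝ → ℝ → ℝ) : Prop :=
  ContDiff ℝ (⊤ : ℕ∞) (fun p : ℝ × ℝ × ℝ => Q p.1 p.2.1 p.2.2)
/-!
By the chain rule, `v = Q(t,x,u)` has `vₜ = Q_t + uₜ Q_y` and
`vₜₜ = Q_tt + 2 uₜ Q_ty + uₜ² Q_yy + uₜₜ Q_y` (using `Q_yt = Q_ty`), and likewise in `x`.
Substituting into `L*[u]v` gives exactly
`(iv) + Q_y · F[u] + 2 uₜ · (ii) − 2 uₓ · (iii) + (uₜ² − uₓ²) · (i)`,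
which vanishes.
-/

open scoped ContDiff

theorem fderiv_fderiv_apply_comm {E F : Type*} [NormedAddCommGroup E] [NormedSpace ℝ E]
    [NormedAddCommGroup F] [NormedSpace ℝ F] {G : E → F} {p : E} (hG : ContDiffAt ℝ 2 G p)
    (v w : E) :
    fderiv ℝ (fun q => fderiv ℝ G q v) p w = fderiv ℝ (fun q => fderiv ℝ G q w) p v := by
  have hd : DifferentiableAt ℝ (fderiv ℝ G) p :=
    (hG.fderiv_right (m := 1) le_rfl).differentiableAt one_ne_zero
  simp [fderiv_clm_apply hd (differentiableAt_const _), (hG.isSymmSndFDerivAt (by simp)).eq]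

abbrev uncurry3 (Q : ℝ → ℝ → ℝ → ℝ) : ℝ × ℝ × ℝ → ℝ := fun p => Q p.1 p.2.1 p.2.2

namespace Smooth2

variable {u : ℝ → ℝ → ℝ}

theorem swap (hu : Smooth2 u) : Smooth2 (fun x t => u t x) :=
  ContDiff.comp (g := Function.uncurry u) hu (contDiff_snd.prodMk contDiff_fst)

theorem hasDerivAt_Dt (hu : Smooth2 u) (t x : ℝ) :
    HasDerivAt (fun s => u s x) (Dt u t x) t :=
  ((hu.differentiable (by simp)).differentiableAt.comp t
    (differentiableAt_id.prodMk (differentiableAt_const x))).hasDerivAt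

theorem Dt_eq_fderiv (hu : Smooth2 u) (t x : ℝ) :
    Dt u t x = fderiv ℝ (Function.uncurry u) (t, x) (1, 0) :=
  (((hu.differentiable (by simp)) (t, x)).hasFDerivAt.comp_hasDerivAt (f := fun s => (s, x)) t
    ((hasDerivAt_id t).prodMk (hasDerivAt_const t x))).deriv

end Smooth2

theorem smooth2_Dt {u : ℝ → ℝ → ℝ} (hu : Smooth2 u) : Smooth2 (Dt u) := by
  have h : (fun p : ℝ × ℝ => Dt u p.1 p.2) = fun p => fderiv ℝ (Function.uncurry u) p (1, 0) :=
    funext fun p => hu.Dt_eq_fderiv p.1 p.2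
  rw [Smooth2, h]
  exact (hu.fderiv_right (m := ∞) (by simp)).clm_apply contDiff_const

namespace Smooth3

variable {Q : ℝ → ℝ → ℝ → ℝ}

theorem swap12 (hQ : Smooth3 Q) : Smooth3 (fun x t y => Q t x y) :=
  ContDiff.comp (g := uncurry3 Q) hQ
    (contDiff_snd.fst.prodMk (contDiff_fst.prodMk contDiff_snd.snd))

theorem hasDerivAt_comp (hQ : Smooth3 Q) {w : ℝ → ℝ × ℝ × ℝ} {w' : ℝ × ℝ × ℝ} {s : ℝ}
    (hw : HasDerivAt w w' s) :
    HasDerivAt (fun r => uncurry3 Q (w r)) (fderiv ℝ (uncurry3 Q) (w s) w') s :=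
  ((hQ.differentiable (by simp)) (w s)).hasFDerivAt.comp_hasDerivAt s hw

theorem D1_eq_fderiv (hQ : Smooth3 Q) (t x y : ℝ) :
    D1 Q t x y = fderiv ℝ (uncurry3 Q) (t, x, y) (1, 0, 0) :=
  (hQ.hasDerivAt_comp
    ((hasDerivAt_id t).prodMk ((hasDerivAt_const t x).prodMk (hasDerivAt_const t y)))).deriv

theorem D3_eq_fderiv (hQ : Smooth3 Q) (t x y : ℝ) :
    D3 Q t x y = fderiv ℝ (uncurry3 Q) (t, x, y) (0, 0, 1) :=
  (hQ.hasDerivAt_comp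
    ((hasDerivAt_const y t).prodMk ((hasDerivAt_const y x).prodMk (hasDerivAt_id y)))).deriv

theorem uncurry3_D1 (hQ : Smooth3 Q) :
    uncurry3 (D1 Q) = fun p => fderiv ℝ (uncurry3 Q) p (1, 0, 0) :=
  funext fun p => hQ.D1_eq_fderiv p.1 p.2.1 p.2.2

theorem uncurry3_D3 (hQ : Smooth3 Q) :
    uncurry3 (D3 Q) = fun p => fderiv ℝ (uncurry3 Q) p (0, 0, 1) :=
  funext fun p => hQ.D3_eq_fderiv p.1 p.2.1 p.2.2

end Smooth3

theorem smooth3_D1 {Q : ℝ → ℝ → ℝ → ℝ} (hQ : Smooth3 Q) : Smooth3 (D1 Q) := by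
  change ContDiff ℝ ∞ (uncurry3 (D1 Q))
  rw [hQ.uncurry3_D1]
  exact (hQ.fderiv_right (m := ∞) (by simp)).clm_apply contDiff_const

theorem smooth3_D3 {Q : ℝ → ℝ → ℝ → ℝ} (hQ : Smooth3 Q) : Smooth3 (D3 Q) := by
  change ContDiff ℝ ∞ (uncurry3 (D3 Q))
  rw [hQ.uncurry3_D3]
  exact (hQ.fderiv_right (m := ∞) (by simp)).clm_apply contDiff_const

theorem D3_D1_eq_D1_D3 {Q : ℝ → ℝ → ℝ → ℝ} (hQ : Smooth3 Q) (t x y : ℝ) :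
    D3 (D1 Q) t x y = D1 (D3 Q) t x y := by
  rw [(smooth3_D1 hQ).D3_eq_fderiv, (smooth3_D3 hQ).D1_eq_fderiv, hQ.uncurry3_D1,
    hQ.uncurry3_D3]
  exact fderiv_fderiv_apply_comm (hQ.contDiffAt.of_le ENat.LEInfty.out) _ _

section Composition

variable {Q : ℝ → ℝ → ℝ → ℝ} {u : ℝ → ℝ → ℝ}

theorem hasDerivAt_comp_t (hQ : Smooth3 Q) (hu : Smooth2 u) (t x : ℝ) :
    HasDerivAt (fun s => Q s x (u s x))
      (D1 Q t x (u t x) + Dt u t x * D3 Q t x (u t x)) t := by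
  have h := hQ.hasDerivAt_comp
    ((hasDerivAt_id t).prodMk ((hasDerivAt_const t x).prodMk (hu.hasDerivAt_Dt t x)))
  have hsplit : ((1 : ℝ), (0 : ℝ), Dt u t x) = (1, 0, 0) + Dt u t x • (0, 0, 1) := by simp
  rwa [hsplit, map_add, map_smul, smul_eq_mul, ← hQ.D1_eq_fderiv, ← hQ.D3_eq_fderiv] at h

theorem Dt_comp (hQ : Smooth3 Q) (hu : Smooth2 u) (t x : ℝ) :
    Dt (fun t x => Q t x (u t x)) t x = D1 Q t x (u t x) + Dt u t x * D3 Q t x (u t x) :=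
  (hasDerivAt_comp_t hQ hu t x).deriv

theorem Dt_Dt_comp (hQ : Smooth3 Q) (hu : Smooth2 u) (t x : ℝ) :
    Dt (Dt fun t x => Q t x (u t x)) t x
      = D1 (D1 Q) t x (u t x) + 2 * Dt u t x * D1 (D3 Q) t x (u t x)
        + Dt u t x ^ 2 * D3 (D3 Q) t x (u t x) + Dt (Dt u) t x * D3 Q t x (u t x) := by
  have h := (hasDerivAt_comp_t (smooth3_D1 hQ) hu t x).add
    (((smooth2_Dt hu).hasDerivAt_Dt t x).mul (hasDerivAt_comp_t (smooth3_D3 hQ) hu t x))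
  rw [funext₂ (Dt_comp hQ hu)]
  refine h.deriv.trans ?_
  rw [D3_D1_eq_D1_D3 hQ]
  ring

/-- Swapping `t` and `x` turns `Dx` into `Dt` and `D2` into `D1` definitionally. -/
theorem Dx_comp (hQ : Smooth3 Q) (hu : Smooth2 u) (t x : ℝ) :
    Dx (fun t x => Q t x (u t x)) t x = D2 Q t x (u t x) + Dx u t x * D3 Q t x (u t x) :=
  Dt_comp hQ.swap12 hu.swap x t

theorem Dx_Dx_comp (hQ : Smooth3 Q) (hu : Smooth2 u) (t x : ℝ) :
    Dx (Dx fun t x => Q t x (u t x)) t x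
      = D2 (D2 Q) t x (u t x) + 2 * Dx u t x * D2 (D3 Q) t x (u t x)
        + Dx u t x ^ 2 * D3 (D3 Q) t x (u t x) + Dx (Dx u) t x * D3 Q t x (u t x) :=
  Dt_Dt_comp hQ.swap12 hu.swap x t

end Composition

theorem stmt_5_general
    (b c m : ℝ → ℝ)
    (Q : ℝ → ℝ → ℝ → ℝ) (hQ : Smooth3 Q)
    (h1 : ∀ t x y : ℝ, D3 (D3 Q) t x y = 0)
    (h2 : ∀ t x y : ℝ, D1 (D3 Q) t x y - b y * D3 Q t x y = 0)
    (h3 : ∀ t x y : ℝ, D2 (D3 Q) t x y + c y * D3 Q t x y = 0)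
    (h4 : ∀ t x y : ℝ,
      D1 (D1 Q) t x y - D2 (D2 Q) t x y - b y * D1 Q t x y - c y * D2 Q t x y
        - m y * D3 Q t x y + deriv m y * Q t x y = 0)
    (u : ℝ → ℝ → ℝ) (hu : Smooth2 u) (hsol : ∀ t x, Fop b c m u t x = 0)
    (v : ℝ → ℝ → ℝ) (hvdef : ∀ t x, v t x = Q t x (u t x)) :
    ∀ t x, Lstar b c m u v t x = 0 := by
  obtain rfl : v = fun t x => Q t x (u t x) := funext₂ hvdef
  intro t x
  have hF := hsol t x
  rw [Fop] at hF
  rw [Lstar, Dt_Dt_comp hQ hu, Dx_Dx_comp hQ hu, Dt_comp hQ hu, Dx_comp hQ hu]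
  linear_combination h4 t x (u t x) + D3 Q t x (u t x) * hF
    + 2 * Dt u t x * h2 t x (u t x) - 2 * Dx u t x * h3 t x (u t x)
    + (Dt u t x ^ 2 - Dx u t x ^ 2) * h1 t x (u t x)

/-- Nonlinear self-adjointness via the substitution v = Q(t,x,u): if Q(t,x,y)
satisfies the split adjoint-symmetry determining system, then v = Q(t,x,u)
solves the adjoint equation whenever u solves the wave equation. -/
theorem stmt_5
    (b c m : ℝ → ℝ)
    (hb : ContDiff ℝ (⊤ : ℕ∞) b) (hc : ContDiff ℝ (⊤ : ℕ∞) c) (hm : ContDiff ℝ (⊤ : ℕ∞) m)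
    (Q : ℝ → ℝ → ℝ → ℝ) (hQ : Smooth3 Q)
    (h1 : ∀ t x y : ℝ, D3 (D3 Q) t x y = 0)
    (h2 : ∀ t x y : ℝ, D1 (D3 Q) t x y - b y * D3 Q t x y = 0)
    (h3 : ∀ t x y : ℝ, D2 (D3 Q) t x y + c y * D3 Q t x y = 0)
    (h4 : ∀ t x y : ℝ,
      D1 (D1 Q) t x y - D2 (D2 Q) t x y - b y * D1 Q t x y - c y * D2 Q t x y
        - m y * D3 Q t x y + deriv m y * Q t x y = 0)
    (u : ℝ → ℝ → ℝ) (hu : Smooth2 u) (hsol : ∀ t x, Fop b c m u t x = 0)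
    (v : ℝ → ℝ → ℝ) (hvdef : ∀ t x, v t x = Q t x (u t x)) :
    ∀ t x, Lstar b c m u v t x = 0 :=
  stmt_5_general b c m Q hQ h1 h2 h3 h4 u hu hsol v hvdef
end
end
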